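/- Let d, D be positive integers and A ∈ ℝ^{d×D} with columns a_1, …, a_D. For I ⊆ {1,…,D}, let λ(I) = inf { Σ_{i∈I} ⟨u, a_i⟩² : ‖u‖ = 1 } and A_0² = min_I (λ(I) + λ(I^c)). Let I_0 be a subset achieving this minimum, and let u_1, u_2 ∈ ℝ^d be unit vectors with Σ_{i∈I_0} ⟨u_1, a_i⟩² = λ(I_0) and Σ_{i∈I_0^c} ⟨u_2, a_i⟩² = λ(I_0^c). Then ‖α_A(u_1 + u_2) − α_A(u_1 − u_2)‖² = 4·A_0² = A_0² · min(‖(u_1+u_2) − (u_1−u_2)‖, ‖(u_1+u_2) + (u_1−u_2)‖)². In particular, the lower Lipschitz constant A_0 of α_A is achieved by x = u_1 + u_2 and y = u_1 − u_2. -/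
import Mathlib


open scoped BigOperators

namespace PR

noncomputable section

/-- Euclidean inner product on `ℝ^d`. -/
def dot {d : ℕ} (x y : Fin d → ℝ) : ℝ := ∑ i, x i * y i

/-- The `k`-th column of `A`. -/
def col {d D : ℕ} (A : Matrix (Fin d) (Fin D) ℝ) (k : Fin D) : Fin d → ℝ := fun i => A i k

/-- Analysis operator `T_A(x)_k = ⟨x, a_k⟩`. -/
def TA {d D : ℕ} (A : Matrix (Fin d) (Fin D) ℝ) (x : Fin d → ℝ) : Fin D → ℝ :=
  fun k => dot x (col A k)

/-- Phase-retrieval map `α_A(x)_k = |⟨x, a_k⟩|`. -/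
def alpha {d D : ℕ} (A : Matrix (Fin d) (Fin D) ℝ) (x : Fin d → ℝ) : Fin D → ℝ :=
  fun k => |dot x (col A k)|

/-- Sorting encoder `β_A(X)`: its `k`-th column is the decreasingly sorted pair
`(max(⟨x₁,a_k⟩,⟨x₂,a_k⟩), min(⟨x₁,a_k⟩,⟨x₂,a_k⟩))`. -/
def beta {d D : ℕ} (A : Matrix (Fin d) (Fin D) ℝ) (X : Matrix (Fin 2) (Fin d) ℝ) :
    Matrix (Fin 2) (Fin D) ℝ :=
  Matrix.of fun j k =>
    if j = 0 then max (dot (X 0) (col A k)) (dot (X 1) (col A k))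
    else min (dot (X 0) (col A k)) (dot (X 1) (col A k))

/-- The 2×2 permutation matrix exchanging the two rows. -/
def P : Matrix (Fin 2) (Fin 2) ℝ := Matrix.of ![![0, 1], ![1, 0]]

/-- Euclidean norm on `ℝ^n`. -/
def vnorm {n : ℕ} (x : Fin n → ℝ) : ℝ := Real.sqrt (∑ i, (x i) ^ 2)

/-- Frobenius norm on `ℝ^{2×n}`. -/
def fnorm {n : ℕ} (X : Matrix (Fin 2) (Fin n) ℝ) : ℝ := Real.sqrt (∑ i, ∑ j, (X i j) ^ 2)

/-- Operator norm of `T_A` (largest singular value of `A`): supremum of `‖T_A x‖`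
over unit vectors `x`. -/
def sigma1 {d D : ℕ} (A : Matrix (Fin d) (Fin D) ℝ) : ℝ :=
  sSup {c : ℝ | ∃ x : Fin d → ℝ, vnorm x = 1 ∧ c = vnorm (TA A x)}

/-- `λ(I) = inf { Σ_{i∈I} ⟨u, a_i⟩² : ‖u‖ = 1 }`, the square of the `d`-th singular value
of the submatrix `A[I]`. -/
def lam {d D : ℕ} (A : Matrix (Fin d) (Fin D) ℝ) (I : Finset (Fin D)) : ℝ :=
  sInf {c : ℝ | ∃ u : Fin d → ℝ, vnorm u = 1 ∧ c = ∑ i ∈ I, (dot u (col A i)) ^ 2}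

/-- `A₀² = min_I (λ(I) + λ(Iᶜ))`. -/
def A0sq {d D : ℕ} (A : Matrix (Fin d) (Fin D) ℝ) : ℝ :=
  sInf {c : ℝ | ∃ I : Finset (Fin D), c = lam A I + lam A Iᶜ}

lemma key (s t : ℝ) : (|s + t| - |s - t|) ^ 2 = 4 * min (s ^ 2) (t ^ 2) := by
  have h1 : |s + t| * |s - t| = |s ^ 2 - t ^ 2| := by
    rw [← abs_mul]; ring_nf
  have h2 : (|s + t| - |s - t|) ^ 2 = 2 * s ^ 2 + 2 * t ^ 2 - 2 * |s ^ 2 - t ^ 2| := by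
    have := sq_abs (s + t); have := sq_abs (s - t)
    nlinarith [h1]
  rcases le_total (s ^ 2) (t ^ 2) with h | h
  · rw [h2, abs_of_nonpos (by linarith), min_eq_left h]; ring
  · rw [h2, abs_of_nonneg (by linarith), min_eq_right h]; ring

lemma dot_add {d : ℕ} (x y v : Fin d → ℝ) : dot (x + y) v = dot x v + dot y v := by
  simp [dot, add_mul, Finset.sum_add_distrib]

lemma dot_sub {d : ℕ} (x y v : Fin d → ℝ) : dot (x - y) v = dot x v - dot y v := by
  simp [dot, sub_mul, Finset.sum_sub_distrib]

lemma vnorm_sq {n : ℕ} (x : Fin n → ℝ) : (vnorm x) ^ 2 = ∑ i, (x i) ^ 2 := by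
  rw [vnorm, Real.sq_sqrt]; positivity

lemma lam_le {d D : ℕ} (A : Matrix (Fin d) (Fin D) ℝ) (I : Finset (Fin D))
    (u : Fin d → ℝ) (hu : vnorm u = 1) : lam A I ≤ ∑ i ∈ I, (dot u (col A i)) ^ 2 := by
  apply csInf_le
  · exact ⟨0, fun c ⟨v, _, hc⟩ => hc ▸ Finset.sum_nonneg fun i _ => sq_nonneg _⟩
  · exact ⟨u, hu, rfl⟩

lemma lam_nonneg {d D : ℕ} (A : Matrix (Fin d) (Fin D) ℝ) (I : Finset (Fin D)) :
    0 ≤ lam A I :=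
  Real.sInf_nonneg fun c ⟨v, _, hc⟩ => hc ▸ Finset.sum_nonneg fun i _ => sq_nonneg _

/-- the lower Lipschitz constant `A₀` of `α_A` is achieved at
`x = u₁ + u₂`, `y = u₁ - u₂` where `u₁, u₂` are unit minimizers for the optimal
partition `I₀`. -/
theorem alpha_lower_lipschitz_achieved
    {d D : ℕ} (hd : 0 < d) (hD : 0 < D) (A : Matrix (Fin d) (Fin D) ℝ)
    (I₀ : Finset (Fin D)) (hI₀ : lam A I₀ + lam A I₀ᶜ = A0sq A)
    (u₁ u₂ : Fin d → ℝ) (hu₁ : vnorm u₁ = 1) (hu₂ : vnorm u₂ = 1)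
    (h₁ : ∑ i ∈ I₀, (dot u₁ (col A i)) ^ 2 = lam A I₀)
    (h₂ : ∑ i ∈ I₀ᶜ, (dot u₂ (col A i)) ^ 2 = lam A I₀ᶜ) :
    (vnorm (alpha A (u₁ + u₂) - alpha A (u₁ - u₂))) ^ 2 = 4 * A0sq A ∧
      (vnorm (alpha A (u₁ + u₂) - alpha A (u₁ - u₂))) ^ 2 =
        A0sq A * (min (vnorm ((u₁ + u₂) - (u₁ - u₂)))
          (vnorm ((u₁ + u₂) + (u₁ - u₂)))) ^ 2 := by
  set s : Fin D → ℝ := fun k => dot u₁ (col A k) with hs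
  set t : Fin D → ℝ := fun k => dot u₂ (col A k) with ht
  have hmain : (vnorm (alpha A (u₁ + u₂) - alpha A (u₁ - u₂))) ^ 2
      = 4 * ∑ k, min (s k ^ 2) (t k ^ 2) := by
    rw [vnorm_sq, Finset.mul_sum]
    apply Finset.sum_congr rfl
    intro k _
    simp only [Pi.sub_apply, alpha, dot_add, dot_sub]
    exact key (s k) (t k)
  -- Σ min = A0sq
  have hsum : ∑ k, min (s k ^ 2) (t k ^ 2) = A0sq A := by
    apply le_antisymm
    · calc ∑ k, min (s k ^ 2) (t k ^ 2)
          = (∑ k ∈ I₀, min (s k ^ 2) (t k ^ 2)) + ∑ k ∈ I₀ᶜ, min (s k ^ 2) (t k ^ 2) := by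
            rw [Finset.sum_add_sum_compl]
        _ ≤ (∑ k ∈ I₀, s k ^ 2) + ∑ k ∈ I₀ᶜ, t k ^ 2 := by
            gcongr with k hk
            exacts [min_le_left _ _, min_le_right _ _]
        _ = A0sq A := by rw [h₁, h₂, hI₀]
    · set J : Finset (Fin D) := Finset.univ.filter (fun k => s k ^ 2 ≤ t k ^ 2) with hJ
      have e1 : ∑ k ∈ J, min (s k ^ 2) (t k ^ 2) = ∑ k ∈ J, s k ^ 2 := by
        apply Finset.sum_congr rfl
        intro k hk
        exact min_eq_left (Finset.mem_filter.mp hk).2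
      have e2 : ∑ k ∈ Jᶜ, min (s k ^ 2) (t k ^ 2) = ∑ k ∈ Jᶜ, t k ^ 2 := by
        apply Finset.sum_congr rfl
        intro k hk
        have : ¬ s k ^ 2 ≤ t k ^ 2 := by
          simpa [hJ] using (Finset.mem_compl.mp hk)
        exact min_eq_right (le_of_not_ge this)
      have hA0le : A0sq A ≤ lam A J + lam A Jᶜ := by
        apply csInf_le
        · refine ⟨0, fun c ⟨I, hc⟩ => ?_⟩
          rw [hc]
          exact add_nonneg (lam_nonneg A I) (lam_nonneg A Iᶜ)
        · exact ⟨J, rfl⟩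
      calc A0sq A ≤ lam A J + lam A Jᶜ := hA0le
        _ ≤ (∑ k ∈ J, s k ^ 2) + ∑ k ∈ Jᶜ, t k ^ 2 :=
            add_le_add (lam_le A J u₁ hu₁) (lam_le A Jᶜ u₂ hu₂)
        _ = ∑ k, min (s k ^ 2) (t k ^ 2) := by
            rw [← e1, ← e2, Finset.sum_add_sum_compl]
  have h4 : (vnorm (alpha A (u₁ + u₂) - alpha A (u₁ - u₂))) ^ 2 = 4 * A0sq A := by
    rw [hmain, hsum]
  refine ⟨h4, ?_⟩
  have hv2 : ∀ u : Fin d → ℝ, vnorm u = 1 → vnorm (fun i => 2 * u i) = 2 := by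
    intro u hu
    have : (∑ i, (2 * u i) ^ 2) = 4 * ∑ i, (u i) ^ 2 := by
      rw [Finset.mul_sum]; apply Finset.sum_congr rfl; intro i _; ring
    rw [vnorm, this, show (4 : ℝ) = 2 ^ 2 by norm_num,
      Real.sqrt_mul (sq_nonneg 2), Real.sqrt_sq (by norm_num : (0:ℝ) ≤ 2)]
    have h1 : Real.sqrt (∑ i, (u i) ^ 2) = 1 := hu
    rw [h1, mul_one]
  have e1 : (u₁ + u₂) - (u₁ - u₂) = fun i => 2 * u₂ i := by
    funext i; simp only [Pi.sub_apply, Pi.add_apply]; ring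
  have e2 : (u₁ + u₂) + (u₁ - u₂) = fun i => 2 * u₁ i := by
    funext i; simp only [Pi.sub_apply, Pi.add_apply]; ring
  rw [h4, e1, e2, hv2 u₂ hu₂, hv2 u₁ hu₁]
  norm_num
  ring

end

end PR
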